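/- Suppose p is reversible and Ψ is a stationary state with boundary data α,β ∈ ℂ^r. Then for every vertex u ∈ Ṽ, the relative finding probability μ_QW(u) := Σ_{a:t(a)=u} |Ψ(a)|² decomposes as μ_QW(u) = Σ_{a:t(a)=u} |j(a)|²/m_E(|a|) + (|⟨m_{δE},α⟩|²/m(δG0))·m_V(u), i.e., as the sum of the local electric power and a reversible measure of the underlying random walk. -/

import Mathlib

open scoped BigOperators

/-- A symmetric directed graph: arcs with origin/terminus maps and an
inversion involution; every vertex has a finite nonempty set of outgoing
arcs; the graph is connected. -/
structure SymDigraph where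
  V : Type
  A : Type
  o : A → V
  t : A → V
  bar : A → A
  bar_inv : Function.Involutive bar
  o_bar : ∀ a, o (bar a) = t a
  t_bar : ∀ a, t (bar a) = o a
  out_fin : ∀ u : V, {a : A | o a = u}.Finite
  out_ne : ∀ u : V, {a : A | o a = u}.Nonempty
  connected : ∀ u v : V, Relation.ReflTransGen (fun x y => ∃ a, o a = x ∧ t a = y) u v

/-- `p` is a transition function of a random walk: `0 < p a ≤ 1` and the
outgoing probabilities at every vertex sum to `1`. -/
def IsTransition (G : SymDigraph) (p : G.A → ℝ) : Prop :=
  (∀ a, 0 < p a ∧ p a ≤ 1) ∧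
  ∀ u : G.V, ∑ᶠ a ∈ {a : G.A | G.o a = u}, p a = 1

/-- The Szegedy evolution:
`(UΨ)(a) = 2√(p a) Σ_{b : t b = o a} √(p b̄) Ψ(b) − Ψ(ā)`. -/
noncomputable def szegedy (G : SymDigraph) (p : G.A → ℝ) (Ψ : G.A → ℂ) : G.A → ℂ :=
  fun a =>
    2 * (Real.sqrt (p a) : ℂ) *
        (∑ᶠ b ∈ {b : G.A | G.t b = G.o a}, (Real.sqrt (p (G.bar b)) : ℂ) * Ψ b)
      - Ψ (G.bar a)

/-- `ρ_V(u) = Σ_{b : t b = u} √(p b̄) Ψ(b)`. -/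
noncomputable def rhoV (G : SymDigraph) (p : G.A → ℝ) (Ψ : G.A → ℂ) (u : G.V) : ℂ :=
  ∑ᶠ b ∈ {b : G.A | G.t b = u}, (Real.sqrt (p (G.bar b)) : ℂ) * Ψ b

/-- `ρ_E(|a|) = (Ψ(a) + Ψ(ā))/2`. -/
noncomputable def rhoE (G : SymDigraph) (Ψ : G.A → ℂ) (a : G.A) : ℂ :=
  (Ψ a + Ψ (G.bar a)) / 2

/-- Reversibility of `p` with reversible measure `m_V`; the detailed balance
condition `p(a) m_V(o a) = p(ā) m_V(t a)`. -/
def IsReversible (G : SymDigraph) (p : G.A → ℝ) (mV : G.V → ℝ) : Prop :=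
  (∀ u, 0 < mV u) ∧ ∀ a, p a * mV (G.o a) = p (G.bar a) * mV (G.t a)

/-- The edge measure `m_E(|a|) = p(a) m_V(o a)`. -/
def mEdge (G : SymDigraph) (p : G.A → ℝ) (mV : G.V → ℝ) (a : G.A) : ℝ :=
  p a * mV (G.o a)

/-- The tailed graph `G̃`: a finite internal graph `G0 = (V0, A0)` together
with `r ≥ 1` semi-infinite tails.  Tail `j` has vertices `tailV j 0,
tailV j 1, …` (with root `tailV j 0 = o(P_j) ∈ V0`, all other tail vertices
outside `V0`) and inward arcs `tailA j k` going from `tailV j (k+1)` to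
`tailV j k`; `e_j = tailA j 0`.  Outward arcs are the `bar (tailA j k)`. -/
structure TailedGraph extends SymDigraph where
  r : ℕ
  r_pos : 0 < r
  V0 : Set V
  A0 : Set A
  V0_fin : V0.Finite
  A0_fin : A0.Finite
  A0_bar : ∀ a ∈ A0, bar a ∈ A0
  A0_ends : ∀ a ∈ A0, o a ∈ V0 ∧ t a ∈ V0
  tailV : Fin r → ℕ → V
  tailA : Fin r → ℕ → A
  tailA_o : ∀ j k, o (tailA j k) = tailV j (k + 1)
  tailA_t : ∀ j k, t (tailA j k) = tailV j k
  tailV_root : ∀ j, tailV j 0 ∈ V0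
  tailV_notin : ∀ j k, tailV j (k + 1) ∉ V0
  tailV_inj : ∀ j k j' k', tailV j (k + 1) = tailV j' (k' + 1) → j = j' ∧ k = k'
  tailA_nin : ∀ j k, tailA j k ∉ A0
  arcs_cover : ∀ a : A, a ∈ A0 ∨ ∃ j k, a = tailA j k ∨ a = bar (tailA j k)
  verts_cover : ∀ u : V, u ∈ V0 ∨ ∃ j k, u = tailV j (k + 1)

/-- A transition function on the tailed graph: additionally `p = 1/2` on all
tail arcs except possibly the arcs leaving `o(P_j)` into tail `j`
(that is, except the `bar (tailA j 0)`). -/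
def TailTransition (G : TailedGraph) (p : G.A → ℝ) : Prop :=
  IsTransition G.toSymDigraph p ∧
  (∀ j k, p (G.tailA j k) = 1 / 2) ∧
  ∀ j k, p (G.bar (G.tailA j (k + 1))) = 1 / 2

/-- `Ψ` is a stationary state with boundary data `α β : ℂ^r`:
`UΨ = Ψ`, `Ψ = α_j` on the inward arcs of tail `j` and `Ψ = β_j` on the
outward arcs of tail `j`. -/
def IsStationaryState (G : TailedGraph) (p : G.A → ℝ) (Ψ : G.A → ℂ)
    (α β : Fin G.r → ℂ) : Prop :=
  szegedy G.toSymDigraph p Ψ = Ψ ∧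
  (∀ j k, Ψ (G.tailA j k) = α j) ∧
  ∀ j k, Ψ (G.bar (G.tailA j k)) = β j

/-- `m(δG0) = Σ_{j=1}^r m_E(|e_j|)`. -/
def mDelta (G : TailedGraph) (p : G.A → ℝ) (mV : G.V → ℝ) : ℝ :=
  ∑ j : Fin G.r, mEdge G.toSymDigraph p mV (G.tailA j 0)

/-- `⟨m_{δE}, α⟩ = Σ_{j=1}^r √(m_E(|e_j|)/m(δG0)) · α_j`. -/
noncomputable def bdryInner (G : TailedGraph) (p : G.A → ℝ) (mV : G.V → ℝ)
    (α : Fin G.r → ℂ) : ℂ :=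
  ∑ j : Fin G.r,
    (Real.sqrt (mEdge G.toSymDigraph p mV (G.tailA j 0) / mDelta G p mV) : ℂ) * α j

/-- The current
`j(a) = √(m_E(|a|)) Ψ(a) − (m_E(|a|)/√(m(δG0))) ⟨m_{δE}, α⟩`. -/
noncomputable def current (G : TailedGraph) (p : G.A → ℝ) (mV : G.V → ℝ)
    (α : Fin G.r → ℂ) (Ψ : G.A → ℂ) (a : G.A) : ℂ :=
  (Real.sqrt (mEdge G.toSymDigraph p mV a) : ℂ) * Ψ a
    - ((mEdge G.toSymDigraph p mV a : ℝ) : ℂ)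
        / (Real.sqrt (mDelta G p mV) : ℂ) * bdryInner G p mV α

/-- A cycle `(a_1, …, a_s)`: consecutive arcs concatenate (cyclically) and
the `2s` arcs `a_1, …, a_s, ā_1, …, ā_s` are pairwise distinct. -/
def IsCycle (G : SymDigraph) (s : ℕ) (c : Fin s → G.A) : Prop :=
  0 < s ∧
  (∀ k : Fin s, G.t (c k) = G.o (c ⟨(k.val + 1) % s, Nat.mod_lt _ k.pos⟩)) ∧
  Function.Injective (Sum.elim c fun k => G.bar (c k))

open Classical in
/-- The cycle vector `w_c`: `1/√(m_E(|a_k|))` at `a_k`, `−1/√(m_E(|a_k|))`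
at `ā_k`, and `0` elsewhere. -/
noncomputable def cycleVec (G : SymDigraph) (mE : G.A → ℝ) {s : ℕ}
    (c : Fin s → G.A) (a : G.A) : ℂ :=
  if ∃ k, a = c k then ((1 / Real.sqrt (mE a) : ℝ) : ℂ)
  else if ∃ k, a = G.bar (c k) then ((-(1 / Real.sqrt (mE a)) : ℝ) : ℂ)
  else 0



section Helpers

open Finset in
private lemma tset (H : SymDigraph) (u : H.V) :
    {a : H.A | H.t a = u} = H.bar '' {a : H.A | H.o a = u} := by
  ext a
  constructor
  · intro h
    exact ⟨H.bar a, by simpa [H.o_bar] using h, H.bar_inv a⟩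
  · rintro ⟨b, hb, rfl⟩
    simpa [H.t_bar] using hb

private lemma tfin (H : SymDigraph) (u : H.V) : {a : H.A | H.t a = u}.Finite := by
  rw [tset]
  exact (H.out_fin u).image _

private lemma mem_tfin {H : SymDigraph} {u : H.V} {a : H.A} :
    a ∈ (tfin H u).toFinset ↔ H.t a = u := by
  rw [Set.Finite.mem_toFinset]; rfl

private lemma sum_in_eq_out {M : Type*} [AddCommMonoid M] (H : SymDigraph) (u : H.V)
    (f : H.A → M) :
    ∑ a ∈ (tfin H u).toFinset, f a = ∑ b ∈ (H.out_fin u).toFinset, f (H.bar b) := by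
  refine Finset.sum_nbij' (fun a => H.bar a) (fun b => H.bar b) ?_ ?_ ?_ ?_ ?_
  · intro a ha
    rw [Set.Finite.mem_toFinset]
    have := mem_tfin.mp ha
    simpa [H.o_bar] using this
  · intro b hb
    rw [Set.Finite.mem_toFinset] at hb
    rw [mem_tfin, H.t_bar]
    exact hb
  · intro a _; exact H.bar_inv a
  · intro b _; exact H.bar_inv b
  · intro a _; rw [H.bar_inv a]

section Main

variable {G : TailedGraph} {p : G.A → ℝ} {mV : G.V → ℝ} {Ψ : G.A → ℂ} {α β : Fin G.r → ℂ}

private lemma psum (hp : TailTransition G p) (u : G.V) :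
    ∑ b ∈ (G.out_fin u).toFinset, p b = 1 := by
  have h := hp.1.2 u
  rwa [finsum_mem_eq_finite_toFinset_sum _ (G.out_fin u)] at h

private lemma pbar_sum (hp : TailTransition G p) (u : G.V) :
    ∑ a ∈ (tfin G.toSymDigraph u).toFinset, p (G.bar a) = 1 := by
  rw [sum_in_eq_out]
  rw [show (fun b => p (G.bar (G.bar b))) = fun b => p b from funext fun b => by rw [G.bar_inv b]]
  exact psum hp u

private lemma rho_eq (u : G.V) :
    rhoV G.toSymDigraph p Ψ u
      = ∑ b ∈ (tfin G.toSymDigraph u).toFinset, (Real.sqrt (p (G.bar b)) : ℂ) * Ψ b :=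
  finsum_mem_eq_finite_toFinset_sum _ (tfin G.toSymDigraph u)

private lemma stat (hΨ : IsStationaryState G p Ψ α β) (a : G.A) :
    Ψ a + Ψ (G.bar a) = 2 * (Real.sqrt (p a) : ℂ) * rhoV G.toSymDigraph p Ψ (G.o a) := by
  have h := congrFun hΨ.1 a
  simp only [szegedy, rhoV] at h ⊢
  linear_combination -h

private lemma stat_sym (hΨ : IsStationaryState G p Ψ α β) (a : G.A) :
    (Real.sqrt (p a) : ℂ) * rhoV G.toSymDigraph p Ψ (G.o a)
      = (Real.sqrt (p (G.bar a)) : ℂ) * rhoV G.toSymDigraph p Ψ (G.t a) := by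
  have h1 := stat hΨ a
  have h2 := stat hΨ (G.bar a)
  rw [G.bar_inv a, G.o_bar] at h2
  linear_combination (h2 - h1) / 2

private lemma mE_bar (hrev : IsReversible G.toSymDigraph p mV) (a : G.A) :
    mEdge G.toSymDigraph p mV (G.bar a) = mEdge G.toSymDigraph p mV a := by
  unfold mEdge
  rw [G.o_bar]
  exact (hrev.2 a).symm

private lemma mE_pos (hp : TailTransition G p) (hrev : IsReversible G.toSymDigraph p mV)
    (a : G.A) : 0 < mEdge G.toSymDigraph p mV a :=
  mul_pos (hp.1.1 a).1 (hrev.1 _)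

private lemma sqrt_mE (hp : TailTransition G p) (hrev : IsReversible G.toSymDigraph p mV)
    (a : G.A) :
    Real.sqrt (mEdge G.toSymDigraph p mV a)
      = Real.sqrt (p (G.bar a)) * Real.sqrt (mV (G.t a)) := by
  have : mEdge G.toSymDigraph p mV a = p (G.bar a) * mV (G.t a) := hrev.2 a
  rw [this, Real.sqrt_mul (le_of_lt (hp.1.1 (G.bar a)).1)]

private lemma kirch (hp : TailTransition G p) (hΨ : IsStationaryState G p Ψ α β) (u : G.V) :
    ∑ a ∈ (tfin G.toSymDigraph u).toFinset,
      (Real.sqrt (p (G.bar a)) : ℂ) * (Ψ a - Ψ (G.bar a)) = 0 := by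
  have key : ∀ a ∈ (tfin G.toSymDigraph u).toFinset,
      (Real.sqrt (p (G.bar a)) : ℂ) * (Ψ a - Ψ (G.bar a))
        = 2 * ((Real.sqrt (p (G.bar a)) : ℂ) * Ψ a)
          - 2 * ((p (G.bar a) : ℝ) : ℂ) * rhoV G.toSymDigraph p Ψ u := by
    intro a ha
    have hta : G.t a = u := mem_tfin.mp ha
    have h2 := stat hΨ (G.bar a)
    rw [G.bar_inv a, G.o_bar, hta] at h2
    have hsq : (Real.sqrt (p (G.bar a)) : ℂ) * (Real.sqrt (p (G.bar a)) : ℂ)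
        = ((p (G.bar a) : ℝ) : ℂ) := by
      rw [← Complex.ofReal_mul, Real.mul_self_sqrt (le_of_lt (hp.1.1 (G.bar a)).1)]
    linear_combination (-(Real.sqrt (p (G.bar a)) : ℂ)) * h2
      - 2 * rhoV G.toSymDigraph p Ψ u * hsq
  rw [Finset.sum_congr rfl key, Finset.sum_sub_distrib, ← Finset.mul_sum, ← rho_eq]
  have : ∑ a ∈ (tfin G.toSymDigraph u).toFinset,
      2 * ((p (G.bar a) : ℝ) : ℂ) * rhoV G.toSymDigraph p Ψ u
      = 2 * ((∑ a ∈ (tfin G.toSymDigraph u).toFinset, p (G.bar a) : ℝ) : ℂ)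
        * rhoV G.toSymDigraph p Ψ u := by
    rw [Complex.ofReal_sum, Finset.mul_sum, Finset.sum_mul]
  rw [this, pbar_sum hp u]
  push_cast
  ring

private lemma sqrt_mV_ne (hrev : IsReversible G.toSymDigraph p mV) (u : G.V) :
    ((Real.sqrt (mV u) : ℝ) : ℂ) ≠ 0 := by
  exact_mod_cast ne_of_gt (Real.sqrt_pos.mpr (hrev.1 u))

private lemma ratio_edge (hp : TailTransition G p) (hrev : IsReversible G.toSymDigraph p mV)
    (hΨ : IsStationaryState G p Ψ α β) (a : G.A) :
    rhoV G.toSymDigraph p Ψ (G.o a) / (Real.sqrt (mV (G.o a)) : ℂ)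
      = rhoV G.toSymDigraph p Ψ (G.t a) / (Real.sqrt (mV (G.t a)) : ℂ) := by
  rw [div_eq_div_iff (sqrt_mV_ne hrev _) (sqrt_mV_ne hrev _)]
  have hs := stat_sym hΨ a
  have h1 : Real.sqrt (p a) * Real.sqrt (mV (G.o a))
      = Real.sqrt (p (G.bar a)) * Real.sqrt (mV (G.t a)) := by
    rw [← Real.sqrt_mul (le_of_lt (hp.1.1 a).1), ← Real.sqrt_mul (le_of_lt (hp.1.1 (G.bar a)).1),
      hrev.2 a]
  have h1c : (Real.sqrt (p a) : ℂ) * (Real.sqrt (mV (G.o a)) : ℂ)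
      = (Real.sqrt (p (G.bar a)) : ℂ) * (Real.sqrt (mV (G.t a)) : ℂ) := by
    exact_mod_cast congrArg (Complex.ofReal) h1
  have hpos : (0 : ℝ) < Real.sqrt (p a) * Real.sqrt (mV (G.o a)) :=
    mul_pos (Real.sqrt_pos.mpr (hp.1.1 a).1) (Real.sqrt_pos.mpr (hrev.1 _))
  have hne : ((Real.sqrt (p a) * Real.sqrt (mV (G.o a)) : ℝ) : ℂ) ≠ 0 := by
    exact_mod_cast ne_of_gt hpos
  apply mul_left_cancel₀ hne
  push_cast
  linear_combination ((Real.sqrt (mV (G.o a)) : ℂ) * (Real.sqrt (mV (G.t a)) : ℂ)) * hs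
    - ((Real.sqrt (mV (G.o a)) : ℂ) * rhoV G.toSymDigraph p Ψ (G.t a)) * h1c

private lemma ratio_const (hp : TailTransition G p) (hrev : IsReversible G.toSymDigraph p mV)
    (hΨ : IsStationaryState G p Ψ α β) (u v : G.V) :
    rhoV G.toSymDigraph p Ψ u / (Real.sqrt (mV u) : ℂ)
      = rhoV G.toSymDigraph p Ψ v / (Real.sqrt (mV v) : ℂ) := by
  have hcon := G.connected u v
  induction hcon with
  | refl => rfl
  | tail hab hbc ih =>
    obtain ⟨a, ha, hc⟩ := hbc
    rw [ih, ← ha, ← hc]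
    exact ratio_edge hp hrev hΨ a

private lemma tin_tail (j : Fin G.r) :
    {a : G.A | G.t a = G.tailV j 1} = {G.tailA j 1, G.bar (G.tailA j 0)} := by
  ext a
  simp only [Set.mem_setOf_eq, Set.mem_insert_iff, Set.mem_singleton_iff]
  constructor
  · intro h
    rcases G.arcs_cover a with hA0 | ⟨j', k, rfl | rfl⟩
    · have h2 := (G.A0_ends a hA0).2
      rw [h] at h2
      exact absurd h2 (G.tailV_notin j 0)
    · rw [G.tailA_t] at h
      cases k with
      | zero =>
        have h2 := G.tailV_root j'
        rw [h] at h2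
        exact absurd h2 (G.tailV_notin j 0)
      | succ k =>
        obtain ⟨rfl, rfl⟩ := G.tailV_inj j' k j 0 h
        left; rfl
    · rw [G.t_bar, G.tailA_o] at h
      obtain ⟨rfl, rfl⟩ := G.tailV_inj j' k j 0 h
      right; rfl
  · rintro (rfl | rfl)
    · exact G.tailA_t j 1
    · rw [G.t_bar, G.tailA_o]

private lemma ne_arcs (j : Fin G.r) : G.tailA j 1 ≠ G.bar (G.tailA j 0) := by
  intro h
  have h1 : G.o (G.tailA j 1) = G.tailV j 2 := G.tailA_o j 1
  have h2 : G.o (G.bar (G.tailA j 0)) = G.tailV j 0 := by rw [G.o_bar, G.tailA_t]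
  rw [h, h2] at h1
  have h3 := G.tailV_root j
  rw [h1] at h3
  exact G.tailV_notin j 1 h3

private lemma rho_tail (hp : TailTransition G p) (hΨ : IsStationaryState G p Ψ α β) (j : Fin G.r) :
    rhoV G.toSymDigraph p Ψ (G.tailV j 1)
      = (Real.sqrt (1 / 2) : ℂ) * (α j + β j) := by
  rw [rhoV, tin_tail, finsum_mem_pair (ne_arcs j), G.bar_inv]
  rw [hΨ.2.1 j 1, hΨ.2.2 j 0, hp.2.2 j 0, hp.2.1 j 0]
  ring

private lemma flux (hp : TailTransition G p) (hrev : IsReversible G.toSymDigraph p mV)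
    (hΨ : IsStationaryState G p Ψ α β) :
    ∑ j : Fin G.r,
      (Real.sqrt (mEdge G.toSymDigraph p mV (G.tailA j 0)) : ℂ) * (α j - β j) = 0 := by
  classical
  set g : G.A → ℂ :=
    fun a => (Real.sqrt (mEdge G.toSymDigraph p mV a) : ℂ) * (Ψ a - Ψ (G.bar a)) with hgdef
  have hg : ∀ u : G.V, ∑ a ∈ (tfin G.toSymDigraph u).toFinset, g a = 0 := by
    intro u
    have h0 := kirch hp hΨ u
    have hc : ∀ a ∈ (tfin G.toSymDigraph u).toFinset,
        g a = (Real.sqrt (mV u) : ℂ)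
          * ((Real.sqrt (p (G.bar a)) : ℂ) * (Ψ a - Ψ (G.bar a))) := by
      intro a ha
      have hta : G.t a = u := mem_tfin.mp ha
      simp only [hgdef]
      rw [sqrt_mE hp hrev a, hta]
      push_cast
      ring
    rw [Finset.sum_congr rfl hc, ← Finset.mul_sum, h0, mul_zero]
  set B : Finset G.A :=
    (G.V0_fin.toFinset).biUnion (fun u => (tfin G.toSymDigraph u).toFinset) with hB
  have hBsum : ∑ a ∈ B, g a = 0 := by
    rw [hB, Finset.sum_biUnion]
    · exact Finset.sum_eq_zero fun u _ => hg u
    · intro x hx y hy hxy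
      simp only [Function.onFun, Finset.disjoint_left]
      intro a hax hay
      exact hxy ((mem_tfin.mp hax).symm.trans (mem_tfin.mp hay))
  have hBmem : ∀ a : G.A, a ∈ B ↔ G.t a ∈ G.V0 := by
    intro a
    rw [hB, Finset.mem_biUnion]
    constructor
    · rintro ⟨u, hu, ha⟩
      rw [mem_tfin.mp ha]
      exact G.V0_fin.mem_toFinset.mp hu
    · intro h
      exact ⟨G.t a, G.V0_fin.mem_toFinset.mpr h, mem_tfin.mpr rfl⟩
  set Ef : Finset G.A := Finset.image (fun j : Fin G.r => G.tailA j 0) Finset.univ with hEf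
  have hsplit : B = G.A0_fin.toFinset ∪ Ef := by
    ext a
    rw [hBmem, Finset.mem_union, Set.Finite.mem_toFinset, hEf, Finset.mem_image]
    constructor
    · intro h
      rcases G.arcs_cover a with hA0 | ⟨j, k, rfl | rfl⟩
      · exact Or.inl hA0
      · cases k with
        | zero => exact Or.inr ⟨j, Finset.mem_univ j, rfl⟩
        | succ k =>
          rw [G.tailA_t] at h
          exact absurd h (G.tailV_notin j k)
      · rw [G.t_bar, G.tailA_o] at h
        exact absurd h (G.tailV_notin j k)
    · rintro (h | ⟨j, -, rfl⟩)
      · exact (G.A0_ends a h).2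
      · rw [G.tailA_t]
        exact G.tailV_root j
  have hdisj : Disjoint G.A0_fin.toFinset Ef := by
    rw [Finset.disjoint_left]
    rintro a ha hEa
    rw [hEf, Finset.mem_image] at hEa
    obtain ⟨j, -, rfl⟩ := hEa
    exact G.tailA_nin j 0 (G.A0_fin.mem_toFinset.mp ha)
  have hA0sum : ∑ a ∈ G.A0_fin.toFinset, g a = 0 := by
    refine Finset.sum_involution (fun a _ => G.bar a) ?_ ?_ ?_ ?_
    · intro a _
      show g a + g (G.bar a) = 0
      simp only [hgdef]
      rw [mE_bar hrev, G.bar_inv]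
      ring
    · intro a _ hfa hbar
      apply hfa
      have hbar' : G.bar a = a := hbar
      show (Real.sqrt (mEdge G.toSymDigraph p mV a) : ℂ) * (Ψ a - Ψ (G.bar a)) = 0
      rw [hbar', sub_self, mul_zero]
    · intro a ha
      exact G.A0_fin.mem_toFinset.mpr (G.A0_bar a (G.A0_fin.mem_toFinset.mp ha))
    · intro a _
      exact G.bar_inv a
  have hEfsum : ∑ a ∈ Ef, g a = ∑ j : Fin G.r, g (G.tailA j 0) := by
    rw [hEf]
    refine Finset.sum_image ?_
    intro j _ j' _ h
    have h2 := congrArg G.o h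
    rw [G.tailA_o, G.tailA_o] at h2
    exact (G.tailV_inj j 0 j' 0 h2).1
  have hzero : ∑ j : Fin G.r, g (G.tailA j 0) = 0 := by
    have h := hBsum
    rw [hsplit, Finset.sum_union hdisj, hA0sum, zero_add, hEfsum] at h
    exact h
  calc ∑ j : Fin G.r,
      (Real.sqrt (mEdge G.toSymDigraph p mV (G.tailA j 0)) : ℂ) * (α j - β j)
      = ∑ j : Fin G.r, g (G.tailA j 0) := by
        refine Finset.sum_congr rfl fun j _ => ?_
        simp only [hgdef]
        rw [hΨ.2.1 j 0, hΨ.2.2 j 0]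
    _ = 0 := hzero

private lemma mDelta_pos (hp : TailTransition G p) (hrev : IsReversible G.toSymDigraph p mV) :
    0 < mDelta G p mV := by
  have : Nonempty (Fin G.r) := ⟨⟨0, G.r_pos⟩⟩
  exact Finset.sum_pos (fun j _ => mE_pos hp hrev _) Finset.univ_nonempty

private lemma rho_formula (hp : TailTransition G p) (hrev : IsReversible G.toSymDigraph p mV)
    (hΨ : IsStationaryState G p Ψ α β) (u : G.V) :
    rhoV G.toSymDigraph p Ψ u
      = (Real.sqrt (mV u) : ℂ)
        * (bdryInner G p mV α / (Real.sqrt (mDelta G p mV) : ℂ)) := by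
  have hMpos := mDelta_pos (mV := mV) hp hrev
  have hsMne : ((Real.sqrt (mDelta G p mV) : ℝ) : ℂ) ≠ 0 := by
    exact_mod_cast ne_of_gt (Real.sqrt_pos.mpr hMpos)
  have hsM2 : ((Real.sqrt (mDelta G p mV) : ℝ) : ℂ) * ((Real.sqrt (mDelta G p mV) : ℝ) : ℂ)
      = ((mDelta G p mV : ℝ) : ℂ) := by
    rw [← Complex.ofReal_mul, Real.mul_self_sqrt hMpos.le]
  set K : ℂ := rhoV G.toSymDigraph p Ψ u / (Real.sqrt (mV u) : ℂ) with hK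
  have hKtail : ∀ j : Fin G.r,
      (Real.sqrt (mEdge G.toSymDigraph p mV (G.tailA j 0)) : ℂ) * (α j + β j)
        = 2 * ((mEdge G.toSymDigraph p mV (G.tailA j 0) : ℝ) : ℂ) * K := by
    intro j
    have hc := ratio_const hp hrev hΨ u (G.tailV j 1)
    rw [← hK] at hc
    rw [rho_tail hp hΨ j] at hc
    have hw : (0:ℝ) < mV (G.tailV j 1) := hrev.1 _
    have htne : ((Real.sqrt (mV (G.tailV j 1)) : ℝ) : ℂ) ≠ 0 := sqrt_mV_ne hrev _
    have ht2 : ((Real.sqrt (mV (G.tailV j 1)) : ℝ) : ℂ)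
        * ((Real.sqrt (mV (G.tailV j 1)) : ℝ) : ℂ) = ((mV (G.tailV j 1) : ℝ) : ℂ) := by
      rw [← Complex.ofReal_mul, Real.mul_self_sqrt hw.le]
    have hmE : mEdge G.toSymDigraph p mV (G.tailA j 0) = 1/2 * mV (G.tailV j 1) := by
      unfold mEdge
      rw [G.tailA_o, hp.2.1 j 0]
    rw [hmE, Real.sqrt_mul (by norm_num : (0:ℝ) ≤ 1/2)]
    rw [hc]
    push_cast
    field_simp
    linear_combination (α j + β j) * ht2
  -- flux consequence
  have hflux := flux hp hrev hΨ
  have hSab : ∑ j : Fin G.r,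
        (Real.sqrt (mEdge G.toSymDigraph p mV (G.tailA j 0)) : ℂ) * α j
      = ∑ j : Fin G.r,
        (Real.sqrt (mEdge G.toSymDigraph p mV (G.tailA j 0)) : ℂ) * β j := by
    rw [← sub_eq_zero, ← Finset.sum_sub_distrib]
    rw [← hflux]
    exact Finset.sum_congr rfl fun j _ => by ring
  -- the weighted α-sum equals M * K
  have hSum : ∑ j : Fin G.r,
        (Real.sqrt (mEdge G.toSymDigraph p mV (G.tailA j 0)) : ℂ) * α j
      = ((mDelta G p mV : ℝ) : ℂ) * K := by
    have h2 : (2:ℂ) * ∑ j : Fin G.r,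
          (Real.sqrt (mEdge G.toSymDigraph p mV (G.tailA j 0)) : ℂ) * α j
        = ∑ j : Fin G.r,
          (Real.sqrt (mEdge G.toSymDigraph p mV (G.tailA j 0)) : ℂ) * (α j + β j) := by
      rw [two_mul]
      nth_rewrite 2 [hSab]
      rw [← Finset.sum_add_distrib]
      exact Finset.sum_congr rfl fun j _ => by ring
    have h3 : ∑ j : Fin G.r, 2 * ((mEdge G.toSymDigraph p mV (G.tailA j 0) : ℝ) : ℂ) * K
        = 2 * ((mDelta G p mV : ℝ) : ℂ) * K := by
      rw [mDelta, Complex.ofReal_sum, Finset.mul_sum, Finset.sum_mul]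
    refine mul_left_cancel₀ (two_ne_zero (α := ℂ)) ?_
    rw [h2, Finset.sum_congr rfl fun j _ => hKtail j, h3]
    ring
  have hBval : bdryInner G p mV α * ((Real.sqrt (mDelta G p mV) : ℝ) : ℂ)
      = ∑ j : Fin G.r, (Real.sqrt (mEdge G.toSymDigraph p mV (G.tailA j 0)) : ℂ) * α j := by
    rw [bdryInner, Finset.sum_mul]
    refine Finset.sum_congr rfl fun j _ => ?_
    rw [Real.sqrt_div (mE_pos hp hrev (G.tailA j 0)).le]
    push_cast
    field_simp
  have hBK : bdryInner G p mV α = ((Real.sqrt (mDelta G p mV) : ℝ) : ℂ) * K := by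
    apply mul_right_cancel₀ hsMne
    rw [hBval, hSum, ← hsM2]
    ring
  rw [hBK, hK]
  field_simp
  rw [mul_div_cancel_right₀ _ (sqrt_mV_ne hrev u)]

end Main

end Helpers

/-- the relative finding probability decomposes as the sum of
the local electric power and a reversible measure:
`μ_QW(u) = Σ_{t(a)=u} |j(a)|²/m_E(|a|) + (|⟨m_{δE},α⟩|²/m(δG0)) m_V(u)`. -/
theorem finding_probability_decomposition (G : TailedGraph) (p : G.A → ℝ)
    (hp : TailTransition G p) (mV : G.V → ℝ)
    (hrev : IsReversible G.toSymDigraph p mV)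
    (Ψ : G.A → ℂ) (α β : Fin G.r → ℂ) (hΨ : IsStationaryState G p Ψ α β) :
    ∀ u : G.V,
      (∑ᶠ a ∈ {a : G.A | G.t a = u}, ‖Ψ a‖ ^ 2)
        = (∑ᶠ a ∈ {a : G.A | G.t a = u},
            ‖current G p mV α Ψ a‖ ^ 2 / mEdge G.toSymDigraph p mV a)
          + ‖bdryInner G p mV α‖ ^ 2 / mDelta G p mV * mV u := by
  intro u
  classical
  have hMpos := mDelta_pos (mV := mV) hp hrev
  have hsMne : Real.sqrt (mDelta G p mV) ≠ 0 := ne_of_gt (Real.sqrt_pos.mpr hMpos)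
  rw [finsum_mem_eq_finite_toFinset_sum _ (tfin G.toSymDigraph u),
    finsum_mem_eq_finite_toFinset_sum _ (tfin G.toSymDigraph u)]
  simp only [Complex.sq_norm]
  have hterm : ∀ a ∈ (tfin G.toSymDigraph u).toFinset,
      Complex.normSq (current G p mV α Ψ a) / mEdge G.toSymDigraph p mV a
        = Complex.normSq (Ψ a)
          + mEdge G.toSymDigraph p mV a * (Complex.normSq (bdryInner G p mV α) / mDelta G p mV)
          - 2 / Real.sqrt (mDelta G p mV)
              * (Real.sqrt (mEdge G.toSymDigraph p mV a)
                * (Ψ a * (starRingEnd ℂ) (bdryInner G p mV α)).re) := by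
    intro a _
    have hm : 0 < mEdge G.toSymDigraph p mV a := mE_pos hp hrev a
    have hmm : ((Real.sqrt (mEdge G.toSymDigraph p mV a) : ℝ) : ℂ)
        * ((Real.sqrt (mEdge G.toSymDigraph p mV a) : ℝ) : ℂ)
        = ((mEdge G.toSymDigraph p mV a : ℝ) : ℂ) := by
      rw [← Complex.ofReal_mul, Real.mul_self_sqrt hm.le]
    have hcur : current G p mV α Ψ a
        = ((Real.sqrt (mEdge G.toSymDigraph p mV a) : ℝ) : ℂ)
          * (Ψ a - ((Real.sqrt (mEdge G.toSymDigraph p mV a)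
              / Real.sqrt (mDelta G p mV) : ℝ) : ℂ) * bdryInner G p mV α) := by
      rw [current]
      push_cast
      linear_combination
        (bdryInner G p mV α / ((Real.sqrt (mDelta G p mV) : ℝ) : ℂ)) * hmm
    rw [hcur, map_mul Complex.normSq, Complex.normSq_ofReal, Real.mul_self_sqrt hm.le,
      mul_div_cancel_left₀ _ (ne_of_gt hm), Complex.normSq_sub,
      map_mul (starRingEnd ℂ), Complex.conj_ofReal,
      map_mul Complex.normSq, Complex.normSq_ofReal]
    rw [show Ψ a * (((Real.sqrt (mEdge G.toSymDigraph p mV a)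
          / Real.sqrt (mDelta G p mV) : ℝ) : ℂ)
            * (starRingEnd ℂ) (bdryInner G p mV α))
        = ((Real.sqrt (mEdge G.toSymDigraph p mV a)
            / Real.sqrt (mDelta G p mV) : ℝ) : ℂ)
          * (Ψ a * (starRingEnd ℂ) (bdryInner G p mV α)) from by ring,
      Complex.re_ofReal_mul]
    have hc2 : Real.sqrt (mEdge G.toSymDigraph p mV a) / Real.sqrt (mDelta G p mV)
        * (Real.sqrt (mEdge G.toSymDigraph p mV a) / Real.sqrt (mDelta G p mV))
        = mEdge G.toSymDigraph p mV a / mDelta G p mV := by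
      rw [div_mul_div_comm, Real.mul_self_sqrt hm.le, Real.mul_self_sqrt hMpos.le]
    rw [hc2]
    ring
  rw [Finset.sum_congr rfl hterm, Finset.sum_sub_distrib, Finset.sum_add_distrib,
    ← Finset.sum_mul, ← Finset.mul_sum]
  have hsum_m : ∑ a ∈ (tfin G.toSymDigraph u).toFinset, mEdge G.toSymDigraph p mV a = mV u := by
    have hme : ∀ a ∈ (tfin G.toSymDigraph u).toFinset,
        mEdge G.toSymDigraph p mV a = p (G.bar a) * mV u := by
      intro a ha
      have hta : G.t a = u := mem_tfin.mp ha
      rw [show mEdge G.toSymDigraph p mV a = p (G.bar a) * mV (G.t a) from hrev.2 a, hta]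
    rw [Finset.sum_congr rfl hme, ← Finset.sum_mul, pbar_sum hp u, one_mul]
  have hX : ∑ a ∈ (tfin G.toSymDigraph u).toFinset,
        Real.sqrt (mEdge G.toSymDigraph p mV a)
          * (Ψ a * (starRingEnd ℂ) (bdryInner G p mV α)).re
      = mV u * Complex.normSq (bdryInner G p mV α) / Real.sqrt (mDelta G p mV) := by
    have h1 : ∀ a ∈ (tfin G.toSymDigraph u).toFinset,
        Real.sqrt (mEdge G.toSymDigraph p mV a)
            * (Ψ a * (starRingEnd ℂ) (bdryInner G p mV α)).re
          = (((Real.sqrt (mEdge G.toSymDigraph p mV a) : ℝ) : ℂ) * Ψ a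
              * (starRingEnd ℂ) (bdryInner G p mV α)).re := by
      intro a _
      rw [show ((Real.sqrt (mEdge G.toSymDigraph p mV a) : ℝ) : ℂ) * Ψ a
            * (starRingEnd ℂ) (bdryInner G p mV α)
          = ((Real.sqrt (mEdge G.toSymDigraph p mV a) : ℝ) : ℂ)
            * (Ψ a * (starRingEnd ℂ) (bdryInner G p mV α)) from by ring,
        Complex.re_ofReal_mul]
    rw [Finset.sum_congr rfl h1, ← Complex.re_sum, ← Finset.sum_mul]
    have h2 : ∑ a ∈ (tfin G.toSymDigraph u).toFinset,
          ((Real.sqrt (mEdge G.toSymDigraph p mV a) : ℝ) : ℂ) * Ψ a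
        = ((mV u : ℝ) : ℂ)
          * (bdryInner G p mV α / ((Real.sqrt (mDelta G p mV) : ℝ) : ℂ)) := by
      have h3 : ∀ a ∈ (tfin G.toSymDigraph u).toFinset,
          ((Real.sqrt (mEdge G.toSymDigraph p mV a) : ℝ) : ℂ) * Ψ a
            = ((Real.sqrt (mV u) : ℝ) : ℂ)
              * (((Real.sqrt (p (G.bar a)) : ℝ) : ℂ) * Ψ a) := by
        intro a ha
        have hta : G.t a = u := mem_tfin.mp ha
        rw [sqrt_mE hp hrev a, hta]
        push_cast
        ring
      rw [Finset.sum_congr rfl h3, ← Finset.mul_sum, ← rho_eq,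
        rho_formula hp hrev hΨ u, ← mul_assoc, ← Complex.ofReal_mul,
        Real.mul_self_sqrt (hrev.1 u).le]
    rw [h2]
    have h4 : ((mV u : ℝ) : ℂ)
          * (bdryInner G p mV α / ((Real.sqrt (mDelta G p mV) : ℝ) : ℂ))
          * (starRingEnd ℂ) (bdryInner G p mV α)
        = ((mV u * Complex.normSq (bdryInner G p mV α)
            / Real.sqrt (mDelta G p mV) : ℝ) : ℂ) := by
      rw [show ((mV u : ℝ) : ℂ)
            * (bdryInner G p mV α / ((Real.sqrt (mDelta G p mV) : ℝ) : ℂ))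
            * (starRingEnd ℂ) (bdryInner G p mV α)
          = ((mV u : ℝ) : ℂ)
            * (bdryInner G p mV α * (starRingEnd ℂ) (bdryInner G p mV α))
            / ((Real.sqrt (mDelta G p mV) : ℝ) : ℂ) from by ring,
        Complex.mul_conj]
      push_cast
      ring
    rw [h4, Complex.ofReal_re]
  rw [hsum_m, hX]
  have hMM : Real.sqrt (mDelta G p mV) * Real.sqrt (mDelta G p mV) = mDelta G p mV :=
    Real.mul_self_sqrt hMpos.le
  field_simp
  rw [Real.sq_sqrt hMpos.le]
  ring
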